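/- arXiv:1708.04471 — 3 statements merged into one kernel-verified Lean document; each statement's English description precedes it below -/
import Mathlib

section
/- Let G be a finite connected simple graph on a finite vertex set V with positive real edge lengths δ, and let d : V → ℤ. Then the set of functions m : V × V → ℤ such that (i) m is antisymmetric (m(v,w) = −m(w,v)), (ii) m(v,w) = 0 whenever v and w are not adjacent, (iii) for every vertex v, ∑_{w adjacent to v} m(v,w) = d(v), and (iv) there exists f : V → ℝ with f(w) − f(v) = m(v,w)·δ(v,w) for all adjacent v, w, is a finite set. -/
/-!
Cut at the edge `v₀ → w₀` with the sublevel set `S = {v | f v < f w₀}` of the potential.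
Every edge leaving `S` climbs, so its slope is nonnegative, while the slopes inside `S` cancel
by antisymmetry. Hence `m v₀ w₀` is at most the total slope leaving `S`, which is the sum of
the divisor over `S` and so at most `∑ v, |d v|`. Antisymmetry gives the matching lower bound,
so the slopes range over a finite box.
-/

open Finset

section Antisymmetric

variable {V β : Type*} {m : V → V → β}

theorem Finset.sum_sum_eq_zero_of_antisymm [AddCommGroup β] [IsAddTorsionFree β]
    (hanti : ∀ v w, m v w = -m w v) (S : Finset V) :
    ∑ v ∈ S, ∑ w ∈ S, m v w = 0 := by
  refine self_eq_neg.mp ?_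
  calc ∑ v ∈ S, ∑ w ∈ S, m v w = ∑ v ∈ S, ∑ w ∈ S, -m w v := by simp only [← hanti]
    _ = -∑ v ∈ S, ∑ w ∈ S, m v w := by rw [sum_comm]; simp only [sum_neg_distrib]

theorem Finset.sum_sum_compl_eq_of_antisymm [Fintype V] [DecidableEq V] [AddCommGroup β]
    [IsAddTorsionFree β] (hanti : ∀ v w, m v w = -m w v) (S : Finset V) :
    ∑ v ∈ S, ∑ w ∈ Sᶜ, m v w = ∑ v ∈ S, ∑ w, m v w := by
  simp only [← sum_add_sum_compl S (m _), sum_add_distrib,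
    sum_sum_eq_zero_of_antisymm hanti, zero_add]

theorem le_sum_abs_sum_of_pos_imp_lt [Fintype V] [AddCommGroup β] [LinearOrder β]
    [IsOrderedAddMonoid β] {α : Type*} [LinearOrder α] (hanti : ∀ v w, m v w = -m w v) (f : V → α)
    (hf : ∀ v w, 0 < m v w → f v < f w) (v₀ w₀ : V) :
    m v₀ w₀ ≤ ∑ v, |∑ w, m v w| := by
  classical
  rcases le_or_gt (m v₀ w₀) 0 with hneg | hpos
  · exact hneg.trans (sum_nonneg fun v _ => abs_nonneg _)
  set S := univ.filter fun v => f v < f w₀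
  have hv₀ : v₀ ∈ S := by simpa [S] using hf v₀ w₀ hpos
  have hw₀ : w₀ ∈ Sᶜ := by simp [S]
  have hcross : ∀ v ∈ S, ∀ w ∈ Sᶜ, 0 ≤ m v w := by
    intro v hv w hw
    simp only [S, mem_compl, mem_filter, mem_univ, true_and, not_lt] at hv hw
    by_contra! hlt
    exact (hv.trans_le hw).not_gt (hf w v (by rw [hanti]; exact neg_pos.mpr hlt))
  calc m v₀ w₀ ≤ ∑ w ∈ Sᶜ, m v₀ w := single_le_sum (hcross v₀ hv₀) hw₀
    _ ≤ ∑ v ∈ S, ∑ w ∈ Sᶜ, m v w :=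
      single_le_sum (fun v hv => sum_nonneg (hcross v hv)) hv₀
    _ = ∑ v ∈ S, ∑ w, m v w := sum_sum_compl_eq_of_antisymm hanti S
    _ ≤ ∑ v ∈ S, |∑ w, m v w| := sum_le_sum fun v _ => le_abs_self _
    _ ≤ ∑ v, |∑ w, m v w| := sum_le_univ_sum_of_nonneg fun v => abs_nonneg _

end Antisymmetric

theorem slopes_with_fixed_divisor_finite_general
    {V : Type*} [Fintype V]
    (G : SimpleGraph V) [DecidableRel G.Adj]
    (δ : V → V → ℝ)
    (hpos : ∀ v w, G.Adj v w → 0 < δ v w)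
    (d : V → ℤ) :
    {m : V → V → ℤ |
        (∀ v w, m v w = - m w v) ∧
        (∀ v w, ¬ G.Adj v w → m v w = 0) ∧
        (∀ v : V, ∑ w ∈ G.neighborFinset v, m v w = d v) ∧
        (∃ f : V → ℝ, ∀ v w, G.Adj v w → f w - f v = (m v w : ℝ) * δ v w)}.Finite := by
  classical
  set B := ∑ v, |d v|
  refine (Set.finite_Icc (fun _ _ => -B) (fun _ _ => B)).subset ?_
  rintro m ⟨hanti, hsupp, hdiv, f, hf⟩
  have hrow : ∀ v, ∑ w, m v w = d v := fun v => by
    rw [← hdiv v]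
    exact (sum_subset (subset_univ _) fun w _ hw => hsupp v w (by simpa using hw)).symm
  have hclimb : ∀ v w, 0 < m v w → f v < f w := by
    intro v w hm
    have hadj : G.Adj v w := by_contra fun h => hm.ne' (hsupp v w h)
    have : (0 : ℝ) < m v w * δ v w := mul_pos (by exact_mod_cast hm) (hpos v w hadj)
    linarith [hf v w hadj]
  have hbound : ∀ v w, m v w ≤ B := fun v w => by
    simpa only [hrow] using le_sum_abs_sum_of_pos_imp_lt hanti f hclimb v w
  exact ⟨fun v w => by linarith [hanti v w, hbound w v], hbound⟩

/-- On a finite connected simple graph with positive symmetric edge lengths `δ` and a fixed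
divisor `d : V → ℤ`, the set of antisymmetric integer slope assignments `m : V × V → ℤ`,
supported on edges, whose sum of outgoing slopes at each vertex is `d v`, and which are
realized by an actual potential `f : V → ℝ` (i.e. `f w - f v = m v w * δ v w` along edges),
is finite. -/
theorem slopes_with_fixed_divisor_finite
    {V : Type*} [Fintype V] [DecidableEq V]
    (G : SimpleGraph V) [DecidableRel G.Adj] (hconn : G.Connected)
    (δ : V → V → ℝ)
    (hsymm : ∀ v w, G.Adj v w → δ v w = δ w v)
    (hpos : ∀ v w, G.Adj v w → 0 < δ v w)
    (d : V → ℤ) :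
    {m : V → V → ℤ |
        (∀ v w, m v w = - m w v) ∧
        (∀ v w, ¬ G.Adj v w → m v w = 0) ∧
        (∀ v : V, ∑ w ∈ G.neighborFinset v, m v w = d v) ∧
        (∃ f : V → ℝ, ∀ v w, G.Adj v w → f w - f v = (m v w : ℝ) * δ v w)}.Finite :=
  slopes_with_fixed_divisor_finite_general G δ hpos d
end

section
/- Let G be a finite tree (a finite connected acyclic simple graph) on a nonempty finite vertex set V with positive real edge lengths δ, and let d : V → ℤ satisfy ∑_{v ∈ V} d(v) = 0. Then there exists a function f : V → ℝ, unique up to adding a constant, such that for every edge {v,w} the slope (f(w) − f(v))/δ(v,w) is an integer, and for every vertex v, ∑_{w adjacent to v} (f(w) − f(v))/δ(v,w) = d(v). -/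
/-!
The divisor of `f` is linear in `f`, and on a connected graph its kernel consists of the constants
(at a maximum of `f` all outgoing slopes are `≤ 0` and sum to `0`, so the maximum spreads to the
neighbours). By rank–nullity its image is therefore the whole hyperplane of degree-zero divisors,
which gives a real solution, unique up to a constant. Summing the divisor over one side of a
bridge, the slopes of the inner edges cancel in pairs and only the slope across the bridge
survives; so on a tree, where every edge is a bridge, all slopes of a solution for an integral
divisor are integers.
-/

open Finset

namespace SimpleGraph

variable {V : Type*} {G : SimpleGraph V} {δ : V → V → ℝ}

theorem slope_antisymm (hsymm : ∀ v w, G.Adj v w → δ v w = δ w v) (f : V → ℝ) {v w : V}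
    (h : G.Adj v w) : (f v - f w) / δ w v = -((f w - f v) / δ v w) := by
  rw [hsymm v w h, ← neg_div, neg_sub]

variable [Fintype V] [DecidableRel G.Adj]

theorem sum_sum_neighborFinset_eq_sum_boundary [DecidableEq V] {s : V → V → ℝ}
    (hs : ∀ v w, G.Adj v w → s w v = -s v w) (S : Finset V) :
    ∑ v ∈ S, ∑ w ∈ G.neighborFinset v, s v w =
      ∑ v ∈ S, ∑ w ∈ G.neighborFinset v with w ∉ S, s v w := by
  let a v w := if G.Adj v w then s v w else 0
  have hinside : ∀ v, ∑ w ∈ G.neighborFinset v with w ∈ S, s v w = ∑ w ∈ S, a v w := by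
    intro v
    rw [← sum_filter]
    congr 1
    ext w
    simp [and_comm]
  have ha : ∀ v w, a w v = -a v w := by
    intro v w
    by_cases h : G.Adj v w
    · simp [a, h, h.symm, hs v w h]
    · simp [a, h, G.adj_comm w v]
  have hcancel : ∑ v ∈ S, ∑ w ∈ S, a v w = 0 := by
    have : ∑ v ∈ S, ∑ w ∈ S, a v w = -∑ v ∈ S, ∑ w ∈ S, a v w := by
      nth_rw 1 [sum_comm]
      rw [← sum_neg_distrib]
      refine sum_congr rfl fun _ _ => ?_
      rw [← sum_neg_distrib]
      exact sum_congr rfl fun _ _ => ha _ _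
    linarith
  simp_rw [← sum_filter_add_sum_filter_not (G.neighborFinset _) (· ∈ S), sum_add_distrib,
    hinside, hcancel, zero_add]

variable (G δ) in
noncomputable def principalDivisor : (V → ℝ) →ₗ[ℝ] V → ℝ where
  toFun f v := ∑ w ∈ G.neighborFinset v, (f w - f v) / δ v w
  map_add' f g := by
    ext v
    simp only [Pi.add_apply, ← sum_add_distrib]
    congr! 1 with w
    ring
  map_smul' c f := by
    ext v
    simp only [Pi.smul_apply, smul_eq_mul, RingHom.id_apply, mul_sum]
    congr! 1 with w
    ring

variable (G δ) in
theorem principalDivisor_apply (f : V → ℝ) (v : V) :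
    G.principalDivisor δ f v = ∑ w ∈ G.neighborFinset v, (f w - f v) / δ v w := rfl

theorem sum_principalDivisor_eq_zero (hsymm : ∀ v w, G.Adj v w → δ v w = δ w v)
    (f : V → ℝ) : ∑ v, G.principalDivisor δ f v = 0 := by
  classical
  simp only [principalDivisor_apply]
  rw [sum_sum_neighborFinset_eq_sum_boundary (fun v w h => slope_antisymm hsymm f h)]
  simp

theorem sum_principalDivisor_eq_slope_of_boundary [DecidableEq V]
    (hsymm : ∀ v w, G.Adj v w → δ v w = δ w v) (f : V → ℝ) {S : Finset V} {v w : V}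
    (hvw : G.Adj v w) (hv : v ∈ S) (hw : w ∉ S)
    (hS : ∀ u ∈ S, ∀ u' ∉ S, G.Adj u u' → u = v ∧ u' = w) :
    ∑ u ∈ S, G.principalDivisor δ f u = (f w - f v) / δ v w := by
  simp only [principalDivisor_apply]
  rw [sum_sum_neighborFinset_eq_sum_boundary (fun v w h => slope_antisymm hsymm f h),
    sum_eq_single_of_mem v hv]
  · have : {u' ∈ G.neighborFinset v | u' ∉ S} = {w} := by
      ext u'
      simp only [mem_filter, mem_neighborFinset, mem_singleton]
      exact ⟨fun ⟨h, h'⟩ => (hS v hv u' h' h).2, by rintro rfl; exact ⟨hvw, hw⟩⟩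
    rw [this, sum_singleton]
  · intro u hu huv
    refine sum_eq_zero fun u' hu' => ?_
    simp only [mem_filter, mem_neighborFinset] at hu'
    exact absurd (hS u hu u' hu'.2 hu'.1).1 huv

theorem IsBridge.exists_finset_boundary_eq {v w : V} (hb : G.IsBridge s(v, w)) :
    ∃ S : Finset V, v ∈ S ∧ w ∉ S ∧
      ∀ u ∈ S, ∀ u' ∉ S, G.Adj u u' → u = v ∧ u' = w := by
  classical
  let H := G.deleteEdges {s(v, w)}
  refine ⟨({u | H.Reachable v u} : Finset V), by simp, by simpa using isBridge_iff.mp hb, ?_⟩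
  simp only [mem_filter, mem_univ, true_and]
  intro u hu u' hu' huu'
  have : s(u, u') = s(v, w) := by
    by_contra hne
    exact hu' (hu.trans (deleteEdges_adj.mpr ⟨huu', hne⟩).reachable)
  rcases Sym2.eq_iff.mp this with h | ⟨rfl, -⟩
  · exact h
  · exact absurd hu (isBridge_iff.mp hb)

theorem IsBridge.exists_slope_eq_intCast {v w : V} (hb : G.IsBridge s(v, w))
    (hsymm : ∀ v w, G.Adj v w → δ v w = δ w v) {f : V → ℝ} {d : V → ℤ}
    (hf : ∀ u, G.principalDivisor δ f u = d u) (hvw : G.Adj v w) :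
    ∃ n : ℤ, (f w - f v) / δ v w = n := by
  classical
  obtain ⟨S, hv, hw, hS⟩ := hb.exists_finset_boundary_eq
  refine ⟨∑ u ∈ S, d u, ?_⟩
  rw [← sum_principalDivisor_eq_slope_of_boundary hsymm f hvw hv hw hS]
  push_cast
  exact sum_congr rfl fun u _ => hf u

theorem eq_of_principalDivisor_eq_zero (hconn : G.Connected)
    (hpos : ∀ v w, G.Adj v w → 0 < δ v w) {h : V → ℝ} (hh : G.principalDivisor δ h = 0)
    (v w : V) : h v = h w := by
  obtain ⟨v₀, -, hmax⟩ := exists_max_image univ h (univ_nonempty_iff.mpr hconn.nonempty)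
  have hstep : ∀ u u', h u = h v₀ → G.Adj u u' → h u' = h v₀ := by
    intro u u' hu huu'
    have hnonpos : ∀ x ∈ G.neighborFinset u, (h x - h u) / δ u x ≤ 0 := fun x hx =>
      div_nonpos_of_nonpos_of_nonneg (by linarith [hmax x (mem_univ x)])
        (hpos u x ((mem_neighborFinset ..).mp hx)).le
    have hzero := (sum_eq_zero_iff_of_nonpos hnonpos).mp (congrFun hh u) u'
      ((mem_neighborFinset ..).mpr huu')
    rw [div_eq_zero_iff, sub_eq_zero] at hzero
    exact (hzero.resolve_right (hpos u u' huu').ne').trans hu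
  have hall : ∀ u, h u = h v₀ := fun u => by
    induction (reachable_iff_reflTransGen v₀ u).mp (hconn v₀ u) with
    | refl => rfl
    | tail _ hadj ih => exact hstep _ _ ih hadj
  rw [hall v, hall w]

theorem finrank_ker_principalDivisor_le_one (hconn : G.Connected)
    (hpos : ∀ v w, G.Adj v w → 0 < δ v w) :
    Module.finrank ℝ (LinearMap.ker (G.principalDivisor δ)) ≤ 1 := by
  obtain ⟨v₀⟩ := hconn.nonempty
  have : Nonempty V := ⟨v₀⟩
  have hker : LinearMap.ker (G.principalDivisor δ) ≤ ℝ ∙ (1 : V → ℝ) := fun h hh =>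
    Submodule.mem_span_singleton.mpr
      ⟨h v₀, funext fun v => by simp [eq_of_principalDivisor_eq_zero hconn hpos hh v₀ v]⟩
  exact (Submodule.finrank_mono hker).trans (finrank_span_singleton one_ne_zero).le

theorem exists_principalDivisor_eq (hconn : G.Connected)
    (hsymm : ∀ v w, G.Adj v w → δ v w = δ w v) (hpos : ∀ v w, G.Adj v w → 0 < δ v w)
    {D : V → ℝ} (hD : ∑ v, D v = 0) : ∃ f, G.principalDivisor δ f = D := by
  have : Nonempty V := hconn.nonempty
  let σ : (V → ℝ) →ₗ[ℝ] ℝ := ∑ v, LinearMap.proj v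
  have hle : LinearMap.range (G.principalDivisor δ) ≤ LinearMap.ker σ := by
    rintro _ ⟨f, rfl⟩
    simpa [σ] using sum_principalDivisor_eq_zero hsymm f
  have hne : LinearMap.ker σ ≠ ⊤ := fun htop => by
    have h1 : (1 : V → ℝ) ∈ LinearMap.ker σ := htop ▸ Submodule.mem_top
    simp [σ] at h1
  have hrank := (G.principalDivisor δ).finrank_range_add_finrank_ker
  have hlt := Submodule.finrank_lt hne
  have hker := finrank_ker_principalDivisor_le_one hconn hpos
  have hrange := Submodule.eq_of_le_of_finrank_le hle (by omega)
  have hDrange : D ∈ LinearMap.range (G.principalDivisor δ) := by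
    rw [hrange]
    simpa [σ] using hD
  exact LinearMap.mem_range.mp hDrange

end SimpleGraph

theorem tree_pwl_function_with_prescribed_divisor_general
    {V : Type*} [Fintype V]
    (G : SimpleGraph V) [DecidableRel G.Adj]
    (hconn : G.Connected) (hacyc : G.IsAcyclic)
    (δ : V → V → ℝ)
    (hsymm : ∀ v w, G.Adj v w → δ v w = δ w v)
    (hpos : ∀ v w, G.Adj v w → 0 < δ v w)
    (d : V → ℤ) (hd : ∑ v : V, d v = 0) :
    (∃ f : V → ℝ,
      (∀ v w, G.Adj v w → ∃ n : ℤ, (f w - f v) / δ v w = (n : ℝ)) ∧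
      (∀ v : V, ∑ w ∈ G.neighborFinset v, (f w - f v) / δ v w = (d v : ℝ))) ∧
    (∀ f g : V → ℝ,
      ((∀ v w, G.Adj v w → ∃ n : ℤ, (f w - f v) / δ v w = (n : ℝ)) ∧
        (∀ v : V, ∑ w ∈ G.neighborFinset v, (f w - f v) / δ v w = (d v : ℝ))) →
      ((∀ v w, G.Adj v w → ∃ n : ℤ, (g w - g v) / δ v w = (n : ℝ)) ∧
        (∀ v : V, ∑ w ∈ G.neighborFinset v, (g w - g v) / δ v w = (d v : ℝ))) →
      ∃ c : ℝ, ∀ v : V, f v = g v + c) := by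
  refine ⟨?_, ?_⟩
  · have hdR : ∑ v, (d v : ℝ) = 0 := by exact_mod_cast hd
    obtain ⟨f, hf⟩ := SimpleGraph.exists_principalDivisor_eq hconn hsymm hpos hdR
    refine ⟨f, fun v w hvw => ?_, congrFun hf⟩
    exact (SimpleGraph.isAcyclic_iff_forall_adj_isBridge.mp hacyc hvw).exists_slope_eq_intCast
      hsymm (congrFun hf) hvw
  · rintro f g ⟨-, hf⟩ ⟨-, hg⟩
    have hfg : G.principalDivisor δ (f - g) = 0 := by
      ext v
      rw [map_sub, Pi.sub_apply, SimpleGraph.principalDivisor_apply,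
        SimpleGraph.principalDivisor_apply, hf v, hg v, sub_self, Pi.zero_apply]
    obtain ⟨v₀⟩ := hconn.nonempty
    refine ⟨f v₀ - g v₀, fun v => ?_⟩
    have := SimpleGraph.eq_of_principalDivisor_eq_zero hconn hpos hfg v v₀
    simp only [Pi.sub_apply] at this
    linarith

/-- On a finite tree (connected acyclic simple graph) with positive symmetric edge lengths `δ`,
given a divisor `d : V → ℤ` of total degree zero, there exists a function `f : V → ℝ`, unique
up to an additive constant, with integer slopes along all edges and with sum of outgoing slopes
at each vertex `v` equal to `d v`. -/
theorem tree_pwl_function_with_prescribed_divisor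
    {V : Type*} [Fintype V] [Nonempty V] [DecidableEq V]
    (G : SimpleGraph V) [DecidableRel G.Adj]
    (hconn : G.Connected) (hacyc : G.IsAcyclic)
    (δ : V → V → ℝ)
    (hsymm : ∀ v w, G.Adj v w → δ v w = δ w v)
    (hpos : ∀ v w, G.Adj v w → 0 < δ v w)
    (d : V → ℤ) (hd : ∑ v : V, d v = 0) :
    (∃ f : V → ℝ,
      (∀ v w, G.Adj v w → ∃ n : ℤ, (f w - f v) / δ v w = (n : ℝ)) ∧
      (∀ v : V, ∑ w ∈ G.neighborFinset v, (f w - f v) / δ v w = (d v : ℝ))) ∧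
    (∀ f g : V → ℝ,
      ((∀ v w, G.Adj v w → ∃ n : ℤ, (f w - f v) / δ v w = (n : ℝ)) ∧
        (∀ v : V, ∑ w ∈ G.neighborFinset v, (f w - f v) / δ v w = (d v : ℝ))) →
      ((∀ v w, G.Adj v w → ∃ n : ℤ, (g w - g v) / δ v w = (n : ℝ)) ∧
        (∀ v : V, ∑ w ∈ G.neighborFinset v, (g w - g v) / δ v w = (d v : ℝ))) →
      ∃ c : ℝ, ∀ v : V, f v = g v + c) :=
  tree_pwl_function_with_prescribed_divisor_general G hconn hacyc δ hsymm hpos d hd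
end

section
/- Let k be a field and let R = k[x,y] be the polynomial ring in two variables, regarded as an algebra over A = k[t] via the k-algebra homomorphism sending t to xy. Then the R-module Der_A(R, R) of A-linear derivations of R is free of rank one, generated by the derivation E determined by E(x) = x and E(y) = −y. Equivalently, the R-linear map Der_A(R,R) → R sending D to D(x) is injective and its image is the principal ideal (x). -/
/-- `R = k[x,y]` regarded as an algebra over `A = k[t]` via `t ↦ xy`:
the local model of a one-parameter smoothing of a node. -/
noncomputable instance smoothingAlgebra (k : Type*) [Field k] :
    Algebra (Polynomial k) (MvPolynomial (Fin 2) k) :=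
  (Polynomial.aeval (MvPolynomial.X 0 * MvPolynomial.X 1 :
      MvPolynomial (Fin 2) k)).toRingHom.toAlgebra

/-!
An `A`-linear derivation `D` of `k[x,y]` kills `t = xy`, so `x D(y) + y D(x) = 0`. As `x` is prime
and does not divide `y`, this forces `D(x) = r x` and then `D(y) = -r y` for a unique `r`. A
derivation is determined by its values on the variables, so `D = r E` with `E = x ∂/∂x - y ∂/∂y`,
which kills `xy` and is therefore `A`-linear.
-/

namespace Derivation

variable {k A R M : Type*} [CommSemiring k] [CommSemiring A] [CommSemiring R] [Algebra k R]
  [Algebra A R] [AddCommMonoid M] [Module R M] [Module k M] [Module A M] [IsScalarTower A R M]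

def ofMapAlgebraMapEqZero (D : Derivation k R M) (hD : ∀ a : A, D (algebraMap A R a) = 0) :
    Derivation A R M where
  toFun := D
  map_add' := D.map_add
  map_smul' a r := by
    rw [Algebra.smul_def, D.leibniz, hD, smul_zero, add_zero, algebraMap_smul]
    rfl
  map_one_eq_zero' := D.map_one_eq_zero
  leibniz' := D.leibniz

@[simp]
lemma ofMapAlgebraMapEqZero_apply (D : Derivation k R M) (hD : ∀ a : A, D (algebraMap A R a) = 0)
    (r : R) : D.ofMapAlgebraMapEqZero hD r = D r :=
  rfl

end Derivation

namespace NodeSmoothing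

open MvPolynomial

variable {k : Type*} [Field k]

instance : IsScalarTower k (Polynomial k) (MvPolynomial (Fin 2) k) :=
  IsScalarTower.of_algebraMap_eq fun a => (Polynomial.aeval_C _ a).symm

lemma algebraMap_eq_aeval (p : Polynomial k) :
    algebraMap (Polynomial k) (MvPolynomial (Fin 2) k) p = Polynomial.aeval (X 0 * X 1) p :=
  rfl

lemma derivation_map_X_zero_mul_X_one
    (D : Derivation (Polynomial k) (MvPolynomial (Fin 2) k) (MvPolynomial (Fin 2) k)) :
    D (X 0 * X 1) = 0 := by
  simpa [algebraMap_eq_aeval] using D.map_algebraMap Polynomial.X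

variable (k) in
noncomputable def euler :
    Derivation (Polynomial k) (MvPolynomial (Fin 2) k) (MvPolynomial (Fin 2) k) :=
  Derivation.ofMapAlgebraMapEqZero (k := k)
    ((X 0 : MvPolynomial (Fin 2) k) • pderiv 0 - (X 1 : MvPolynomial (Fin 2) k) • pderiv 1)
    fun p => by
      rw [algebraMap_eq_aeval, Derivation.map_aeval, Derivation.leibniz]
      simp [mul_comm]

lemma euler_X_zero : euler k (X 0) = X 0 := by
  simp [euler]

lemma euler_X_one : euler k (X 1) = -X 1 := by
  simp [euler]

lemma X_zero_dvd_derivation_X_zero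
    (D : Derivation (Polynomial k) (MvPolynomial (Fin 2) k) (MvPolynomial (Fin 2) k)) :
    X 0 ∣ D (X 0) := by
  have h := derivation_map_X_zero_mul_X_one D
  rw [D.leibniz, smul_eq_mul, smul_eq_mul] at h
  have hdvd : (X 0 : MvPolynomial (Fin 2) k) ∣ X 1 * D (X 0) :=
    ⟨-D (X 1), by linear_combination h⟩
  exact (X_prime.dvd_or_dvd hdvd).resolve_left fun h01 => by simp [X_dvd_X] at h01

lemma derivation_eq_smul_euler
    {D : Derivation (Polynomial k) (MvPolynomial (Fin 2) k) (MvPolynomial (Fin 2) k)}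
    {r : MvPolynomial (Fin 2) k} (hr : D (X 0) = X 0 * r) : D = r • euler k := by
  have h := derivation_map_X_zero_mul_X_one D
  rw [D.leibniz, smul_eq_mul, smul_eq_mul, hr] at h
  have hX1 : D (X 1) = -(X 1 * r) :=
    mul_left_cancel₀ (X_ne_zero 0) (by linear_combination h)
  have : D.restrictScalars k = (r • euler k).restrictScalars k := by
    refine derivation_ext fun i => ?_
    fin_cases i <;> simp [hr, hX1, euler_X_zero, euler_X_one, mul_comm]
  exact Derivation.ext (DFunLike.congr_fun this ·)

lemma smul_euler_X_zero (r : MvPolynomial (Fin 2) k) : (r • euler k) (X 0) = X 0 * r := by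
  simp [euler_X_zero, mul_comm]

end NodeSmoothing

open MvPolynomial NodeSmoothing in
/-- For `R = k[x,y]` over `A = k[t]` with `t ↦ xy`, the module `Der_A(R,R)` of `A`-linear
derivations is free of rank one, generated by the derivation `E` with `E x = x`, `E y = -y`.
Equivalently, the map `Der_A(R,R) → R`, `D ↦ D x`, is injective with image the principal
ideal `(x)`. -/
theorem smoothing_log_tangent_free_of_rank_one (k : Type*) [Field k] :
    (∃ E : Derivation (Polynomial k) (MvPolynomial (Fin 2) k) (MvPolynomial (Fin 2) k),
      E (MvPolynomial.X 0) = MvPolynomial.X 0 ∧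
      E (MvPolynomial.X 1) = - MvPolynomial.X 1 ∧
      ∀ D : Derivation (Polynomial k) (MvPolynomial (Fin 2) k) (MvPolynomial (Fin 2) k),
        ∃! r : MvPolynomial (Fin 2) k, D = r • E) ∧
    Function.Injective
      (fun D : Derivation (Polynomial k) (MvPolynomial (Fin 2) k) (MvPolynomial (Fin 2) k) =>
        D (MvPolynomial.X 0)) ∧
    Set.range
      (fun D : Derivation (Polynomial k) (MvPolynomial (Fin 2) k) (MvPolynomial (Fin 2) k) =>
        D (MvPolynomial.X 0)) =
      (Ideal.span {(MvPolynomial.X 0 : MvPolynomial (Fin 2) k)} :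
        Ideal (MvPolynomial (Fin 2) k)) := by
  refine ⟨⟨euler k, euler_X_zero, euler_X_one, fun D => ?_⟩, fun D₁ D₂ h => ?_, ?_⟩
  · obtain ⟨r, hr⟩ := X_zero_dvd_derivation_X_zero D
    refine ⟨r, derivation_eq_smul_euler hr, fun s hs => ?_⟩
    exact mul_left_cancel₀ (X_ne_zero 0) (by rw [← smul_euler_X_zero s, ← hs, hr])
  · obtain ⟨r, hr⟩ := X_zero_dvd_derivation_X_zero D₁
    have h : D₁ (X 0) = D₂ (X 0) := h
    exact (derivation_eq_smul_euler hr).trans (derivation_eq_smul_euler (h ▸ hr)).symm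
  · ext p
    simp only [Set.mem_range, SetLike.mem_coe, Ideal.mem_span_singleton]
    exact ⟨fun ⟨D, hD⟩ => hD ▸ X_zero_dvd_derivation_X_zero D,
      fun ⟨r, hr⟩ => ⟨r • euler k, hr ▸ smul_euler_X_zero r⟩⟩
end
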